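/- arXiv:2101.01242 — 2 statements merged into one kernel-verified Lean document; each statement's English description precedes it below -/
import Mathlib

section
/- If a metric space (X,d) contains, for every positive integer n, an n-point subset whose points are pairwise equidistant (with some common positive distance possibly depending on n), then (X,d) admits no loose embedding into any finite-dimensional Euclidean space ℝ^N. -/
/-!
A loose embedding preserves the relation "equal distances", so it maps a regular simplex to a
regular simplex, whose side is positive because only coincident points have distance `0`. In a
Euclidean space a regular simplex with weights `w` summing to `0` satisfies
`‖∑ wᵢ pᵢ‖² = c² ∑ wᵢ² / 2`, so it is affinely independent and has at most `N + 1` vertices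
in `ℝ^N`; a regular simplex with `N + 2` vertices in `X` therefore has nowhere to go.
-/

open Finset Module

section Euclidean

variable {V P ι : Type*} [NormedAddCommGroup V] [InnerProductSpace ℝ V] [MetricSpace P]
  [NormedAddTorsor V P]

theorem affineIndependent_of_dist_eq {p : ι → P} {c : ℝ} (hc : c ≠ 0)
    (hp : ∀ i j, i ≠ j → dist (p i) (p j) = c) : AffineIndependent ℝ p := by
  classical
  intro s w hw hv
  have hdist : ∀ i j,
      dist (p i) (p j) * dist (p i) (p j) = c ^ 2 - if i = j then c ^ 2 else 0 := by
    intro i j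
    rcases eq_or_ne i j with rfl | hij
    · simp
    · simp [hp i j hij, hij, sq]
  have hgram : ∑ i ∈ s, ∑ j ∈ s, w i * w j * (dist (p i) (p j) * dist (p i) (p j)) = 0 := by
    have h := EuclideanGeometry.inner_weightedVSub p hw p hw
    rw [hv, inner_zero_left] at h
    linarith
  have hsq : c ^ 2 * ∑ i ∈ s, w i ^ 2 = 0 := by
    simp_rw [hdist, mul_sub, sum_sub_distrib, mul_ite, mul_zero, sum_ite_eq,
      ← sum_mul, ← mul_sum, hw] at hgram
    simpa [mul_sum, sq, mul_comm] using hgram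
  replace hsq := (mul_eq_zero.mp hsq).resolve_left (pow_ne_zero 2 hc)
  intro i hi
  exact pow_eq_zero_iff two_ne_zero |>.mp <|
    (sum_eq_zero_iff_of_nonneg fun j _ => sq_nonneg (w j)).mp hsq i hi

theorem card_le_finrank_succ_of_dist_eq [FiniteDimensional ℝ V] [Fintype ι] {p : ι → P}
    {c : ℝ} (hc : c ≠ 0) (hp : ∀ i j, i ≠ j → dist (p i) (p j) = c) :
    Fintype.card ι ≤ finrank ℝ V + 1 :=
  (affineIndependent_of_dist_eq hc hp).card_le_finrank_succ.trans <|
    Nat.add_le_add_right (Submodule.finrank_le _) 1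

end Euclidean

def IsLooseEmbedding {X Y : Type*} [PseudoMetricSpace X] [PseudoMetricSpace Y] (f : X → Y) :
    Prop :=
  ∀ x x' z z' : X, dist x x' = dist z z' ↔ dist (f x) (f x') = dist (f z) (f z')

namespace IsLooseEmbedding

variable {X Y : Type*} [PseudoMetricSpace X] [PseudoMetricSpace Y] {f : X → Y}

theorem dist_pos (hf : IsLooseEmbedding f) {x x' : X} (h : 0 < dist x x') :
    0 < dist (f x) (f x') := by
  refine dist_nonneg.lt_of_ne fun h0 => h.ne' ?_
  simpa using (hf x x' x x).mpr (by simp [← h0])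

theorem exists_dist_eq_of_dist_eq (hf : IsLooseEmbedding f) {ι : Type*} [Nontrivial ι]
    {p : ι → X} {c : ℝ} (hc : 0 < c) (hp : ∀ i j, i ≠ j → dist (p i) (p j) = c) :
    ∃ c' > 0, ∀ i j, i ≠ j → dist (f (p i)) (f (p j)) = c' := by
  obtain ⟨i₀, j₀, hij₀⟩ := exists_pair_ne ι
  refine ⟨_, hf.dist_pos (hp i₀ j₀ hij₀ ▸ hc), fun i j hij => ?_⟩
  exact (hf _ _ _ _).mp (by rw [hp i j hij, hp i₀ j₀ hij₀])

end IsLooseEmbedding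

theorem no_loose_embedding_of_arbitrarily_large_regular_simplices
    {X : Type*} [MetricSpace X]
    (hsimplex : ∀ n : ℕ, ∃ (p : Fin n → X) (c : ℝ), 0 < c ∧
      ∀ i j : Fin n, i ≠ j → dist (p i) (p j) = c) (N : ℕ) :
    ¬ ∃ f : X → EuclideanSpace ℝ (Fin N),
      ∀ x x' z z' : X, dist x x' = dist z z' ↔ dist (f x) (f x') = dist (f z) (f z') := by
  rintro ⟨f, hf⟩
  obtain ⟨p, c, hc, hp⟩ := hsimplex (N + 2)
  obtain ⟨c', hc', hfp⟩ := IsLooseEmbedding.exists_dist_eq_of_dist_eq hf hc hp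
  have hcard := card_le_finrank_succ_of_dist_eq hc'.ne' hfp
  rw [Fintype.card_fin, finrank_euclideanSpace_fin] at hcard
  omega
end

section
/- If a compact metric space (X,d) contains n-flags of median hyperplanes for every positive integer n, then X admits no loose embedding into any finite-dimensional Euclidean space. -/
open RealInnerProductSpace

lemma inner_sub_sub_eq_zero_of_dist_eq {E : Type*} [NormedAddCommGroup E]
    [InnerProductSpace ℝ E] {x y p q : E}
    (hx : ‖x - p‖ = ‖x - q‖) (hy : ‖y - p‖ = ‖y - q‖) :
    ⟪x - y, p - q⟫ = 0 := by
  have hx2 : ‖x - p‖ ^ 2 = ‖x - q‖ ^ 2 := by rw [hx]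
  have hy2 : ‖y - p‖ ^ 2 = ‖y - q‖ ^ 2 := by rw [hy]
  rw [norm_sub_sq_real, norm_sub_sq_real] at hx2 hy2
  rw [inner_sub_left, inner_sub_right, inner_sub_right]
  linarith

theorem no_loose_embedding_of_arbitrarily_large_flags
    {X : Type*} [MetricSpace X] [CompactSpace X]
    (hflags : ∀ n : ℕ, ∃ p q : Fin n → X,
      (∀ i, p i ≠ q i) ∧
      (∀ s i : Fin n, s < i →
        dist (p i) (p s) = dist (p i) (q s) ∧ dist (q i) (p s) = dist (q i) (q s)))
    (N : ℕ) :
    ¬ ∃ f : X → EuclideanSpace ℝ (Fin N),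
      ∀ x x' z z' : X, dist x x' = dist z z' ↔ dist (f x) (f x') = dist (f z) (f z') := by
  rintro ⟨f, hf⟩
  obtain ⟨p, q, hpq, hflag⟩ := hflags (N + 1)
  set v : Fin (N + 1) → EuclideanSpace ℝ (Fin N) := fun i => f (p i) - f (q i) with hv
  have hvne : ∀ i, v i ≠ 0 := by
    intro i h
    have h' : f (p i) - f (q i) = 0 := h
    have h0 : dist (f (p i)) (f (p i)) = dist (f (p i)) (f (q i)) := by
      rw [dist_self, dist_eq_norm, h', norm_zero]
    have := (hf (p i) (p i) (p i) (q i)).mpr h0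
    rw [dist_self] at this
    exact hpq i (dist_eq_zero.mp this.symm)
  have horth : ∀ s i : Fin (N + 1), s < i → ⟪v i, v s⟫ = 0 := by
    intro s i hsi
    obtain ⟨h1, h2⟩ := hflag s i hsi
    have e1 : ‖f (p i) - f (p s)‖ = ‖f (p i) - f (q s)‖ := by
      rw [← dist_eq_norm, ← dist_eq_norm]
      exact (hf (p i) (p s) (p i) (q s)).mp h1
    have e2 : ‖f (q i) - f (p s)‖ = ‖f (q i) - f (q s)‖ := by
      rw [← dist_eq_norm, ← dist_eq_norm]
      exact (hf (q i) (p s) (q i) (q s)).mp h2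
    exact inner_sub_sub_eq_zero_of_dist_eq e1 e2
  have hortho : ∀ i j : Fin (N + 1), i ≠ j → ⟪v i, v j⟫ = 0 := by
    intro i j hij
    rcases lt_or_gt_of_ne hij with h | h
    · rw [real_inner_comm]; exact horth i j h
    · exact horth j i h
  have hli : LinearIndependent ℝ v :=
    linearIndependent_of_ne_zero_of_inner_eq_zero hvne hortho
  have hcard := hli.fintype_card_le_finrank
  simp [finrank_euclideanSpace] at hcard
end
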